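/- arXiv:1209.6506 — 5 statements merged into one kernel-verified Lean document; each statement's English description precedes it below -/
import Mathlib

section
/- Let G be a finite simple graph and let T be a set of edges of G whose spanning subgraph (on the set of vertices covered by T) has exactly two connected components A and B, where A is a tree and B is connected and contains exactly one cycle (equivalently, B has exactly |V(B)| edges). Let C be a 4-cycle of G with edges e1, f1, e2, f2 in cyclic order such that e1, e2 ∈ T, f1, f2 ∉ T, e1 is an edge of A, and e2 is an edge of the unique cycle of B. Then the edge set T' = (T \ {e1, e2}) ∪ {f1, f2} forms a tree (a connected acyclic graph) on the vertex set V(A) ∪ V(B). -/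
/-!
Deleting `e1 = s(p, q)` splits the tree `A` into a subtree through `p` and one through `q`;
since `e2 = s(r, w)` lies on the cycle of `B`, deleting it leaves a spanning tree of `V(B)`.
The new edges `s(q, r)` and `s(w, p)` join these three pieces into a connected graph on
`V(A) ∪ V(B)` with `|A| + |B| = |V(A)| + |V(B)| - 1` edges, which is therefore a tree.
-/

open SimpleGraph

def edgeSupport {V : Type*} (S : Set (Sym2 V)) : Set V := {v | ∃ e ∈ S, v ∈ e}

section edgeSupport

variable {V : Type*}

lemma left_mem_edgeSupport {E : Set (Sym2 V)} {a b : V} (h : s(a, b) ∈ E) :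
    a ∈ edgeSupport E :=
  ⟨s(a, b), h, Sym2.mem_mk_left a b⟩

lemma right_mem_edgeSupport {E : Set (Sym2 V)} {a b : V} (h : s(a, b) ∈ E) :
    b ∈ edgeSupport E :=
  ⟨s(a, b), h, Sym2.mem_mk_right a b⟩

lemma edgeSupport_union (E F : Set (Sym2 V)) :
    edgeSupport (E ∪ F) = edgeSupport E ∪ edgeSupport F := by
  ext v
  simp only [edgeSupport, Set.mem_union, Set.mem_ofPred_eq, or_and_right, exists_or]

end edgeSupport

section flipEdges

variable {V : Type*} {T E : Set (Sym2 V)} {p q r w : V}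

def flipEdges (T : Set (Sym2 V)) (p q r w : V) : Set (Sym2 V) :=
  (T \ {s(p, q), s(r, w)}) ∪ {s(q, r), s(w, p)}

lemma mem_flipEdges_left : s(q, r) ∈ flipEdges T p q r w := Or.inr (Or.inl rfl)

lemma mem_flipEdges_right : s(w, p) ∈ flipEdges T p q r w := Or.inr (Or.inr rfl)

lemma diff_subset_flipEdges_left (hE : E ⊆ T) (h : s(r, w) ∉ E) :
    E \ {s(p, q)} ⊆ flipEdges T p q r w := by
  rintro e ⟨he, hne⟩
  refine Or.inl ⟨hE he, ?_⟩
  rintro (rfl | rfl)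
  exacts [hne rfl, h he]

lemma diff_subset_flipEdges_right (hE : E ⊆ T) (h : s(p, q) ∉ E) :
    E \ {s(r, w)} ⊆ flipEdges T p q r w := by
  rintro e ⟨he, hne⟩
  refine Or.inl ⟨hE he, ?_⟩
  rintro (rfl | rfl)
  exacts [h he, hne rfl]

lemma ncard_flipEdges [Finite V] (hpq : s(p, q) ∈ T) (hrw : s(r, w) ∈ T)
    (he : s(p, q) ≠ s(r, w)) (hqr : s(q, r) ∉ T) (hwp : s(w, p) ∉ T)
    (hf : s(q, r) ≠ s(w, p)) :
    (flipEdges T p q r w).ncard = T.ncard := by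
  have hsub : {s(p, q), s(r, w)} ⊆ T := Set.insert_subset hpq (Set.singleton_subset_iff.mpr hrw)
  have hdisj : Disjoint (T \ {s(p, q), s(r, w)}) {s(q, r), s(w, p)} := by
    rw [Set.disjoint_insert_right, Set.disjoint_singleton_right]
    exact ⟨fun h => hqr h.1, fun h => hwp h.1⟩
  have hle := Set.ncard_le_ncard hsub
  rw [Set.ncard_pair he] at hle
  rw [flipEdges, Set.ncard_union_eq hdisj, Set.ncard_sdiff hsub, Set.ncard_pair he,
    Set.ncard_pair hf]
  omega

lemma edgeSupport_flipEdges_subset (hpq : s(p, q) ∈ T) (hrw : s(r, w) ∈ T) :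
    edgeSupport (flipEdges T p q r w) ⊆ edgeSupport T := by
  rintro v ⟨e, he | he, hv⟩
  · exact ⟨e, he.1, hv⟩
  · simp only [Set.mem_insert_iff, Set.mem_singleton_iff] at he
    rcases he with rfl | rfl <;> rcases Sym2.mem_iff.mp hv with rfl | rfl
    exacts [right_mem_edgeSupport hpq, left_mem_edgeSupport hrw,
      right_mem_edgeSupport hrw, left_mem_edgeSupport hpq]

lemma disjoint_diagSet_flipEdges (hT : Disjoint T Sym2.diagSet) (hqr : q ≠ r) (hwp : w ≠ p) :
    Disjoint (flipEdges T p q r w) Sym2.diagSet := by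
  refine Set.disjoint_union_left.mpr ⟨hT.mono_left Set.sdiff_subset, ?_⟩
  simp only [Set.disjoint_insert_left, Set.disjoint_singleton_left, Sym2.mem_diagSet,
    Sym2.mk_isDiag_iff]
  exact ⟨hqr, hwp⟩

end flipEdges

namespace SimpleGraph

variable {V : Type*} {G : SimpleGraph V}

lemma support_fromEdgeSet_subset (E : Set (Sym2 V)) : (fromEdgeSet E).support ⊆ edgeSupport E :=
  fun _ ⟨_, hab⟩ => left_mem_edgeSupport ((fromEdgeSet_adj E).mp hab).1

lemma Connected.reachable_of_induce {s : Set V} (h : (G.induce s).Connected) {u v : V}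
    (hu : u ∈ s) (hv : v ∈ s) : G.Reachable u v :=
  (h ⟨u, hu⟩ ⟨v, hv⟩).map (Embedding.induce s).toHom

lemma connected_induce_of_forall_reachable {s : Set V} (hs : G.support ⊆ s) {u : V} (hu : u ∈ s)
    (h : ∀ v ∈ s, G.Reachable u v) : (G.induce s).Connected := by
  rw [connected_iff_exists_forall_reachable]
  refine ⟨⟨u, hu⟩, fun ⟨v, hv⟩ => ?_⟩
  obtain ⟨p⟩ := h v hv
  have hp : ∀ x ∈ p.support, x ∈ s := fun x hx => by
    by_cases hnil : p.Nil
    · rw [Walk.nil_iff_support_eq.mp hnil, List.mem_singleton] at hx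
      exact hx ▸ hu
    · exact hs (mem_support_of_mem_walk_support p hnil hx)
  exact (p.induce s hp).reachable

lemma card_edgeSet_induce_of_support_subset {s : Set V} (hs : G.support ⊆ s) :
    Nat.card (G.induce s).edgeSet = Nat.card G.edgeSet := by
  refine Nat.card_congr (Equiv.ofBijective (Embedding.induce s).mapEdgeSet
    ⟨(Embedding.induce s).mapEdgeSet.injective, ?_⟩)
  rintro ⟨e, he⟩
  induction e using Sym2.ind with
  | _ a b =>
    have hab : G.Adj a b := he
    exact ⟨⟨s(⟨a, hs ⟨b, hab⟩⟩, ⟨b, hs ⟨a, hab.symm⟩⟩), hab⟩, rfl⟩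

lemma isTree_induce_fromEdgeSet_iff [Finite V] {E : Set (Sym2 V)} {s : Set V}
    (hE : Disjoint E Sym2.diagSet) (hs : edgeSupport E ⊆ s) :
    ((fromEdgeSet E).induce s).IsTree ↔
      ((fromEdgeSet E).induce s).Connected ∧ E.ncard + 1 = s.ncard := by
  rw [isTree_iff_connected_and_card,
    card_edgeSet_induce_of_support_subset ((support_fromEdgeSet_subset E).trans hs),
    edgeSet_fromEdgeSet, hE.sdiff_eq_left, Nat.card_coe_set_eq, Nat.card_coe_set_eq]

lemma Reachable.deleteEdges_or {u x : V} (y : V) (h : G.Reachable u x) :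
    (G.deleteEdges {s(x, y)}).Reachable u x ∨ (G.deleteEdges {s(x, y)}).Reachable u y := by
  obtain ⟨p⟩ := h
  induction p with
  | nil => exact .inl (.refl _)
  | @cons a b x hab _ ih =>
    by_cases he : s(a, b) = s(x, y)
    · rcases Sym2.eq_iff.mp he with ⟨rfl, -⟩ | ⟨rfl, -⟩
      · exact .inl (.refl _)
      · exact .inr (.refl _)
    · have hadj : (G.deleteEdges {s(x, y)}).Adj a b := deleteEdges_adj.mpr ⟨hab, he⟩
      exact ih.imp hadj.reachable.trans hadj.reachable.trans

lemma reachable_deleteEdges_of_not_isAcyclic {x y : V} (hG : ¬ G.IsAcyclic)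
    (h : (G.deleteEdges {s(x, y)}).IsAcyclic) : (G.deleteEdges {s(x, y)}).Reachable x y := by
  by_contra hxy
  exact hG (((isAcyclic_add_edge_iff_of_not_reachable x y hxy).mpr h).anti le_sdiff_sup)

/-- Counting shows that `B` is not a tree, hence has a cycle; as deleting `s(x, y)` breaks every
cycle, that edge lies on one and is not a bridge. -/
lemma reachable_diff_of_ncard_edgeSupport_eq [Finite V] {B : Set (Sym2 V)}
    (hB : Disjoint B Sym2.diagSet) (hconn : ((fromEdgeSet B).induce (edgeSupport B)).Connected)
    (hcard : B.ncard = (edgeSupport B).ncard) {x y : V}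
    (hacyc : (fromEdgeSet (B \ {s(x, y)})).IsAcyclic) :
    (fromEdgeSet (B \ {s(x, y)})).Reachable x y := by
  have hcyclic : ¬ (fromEdgeSet B).IsAcyclic := fun h => by
    have := ((isTree_induce_fromEdgeSet_iff hB subset_rfl).mp ⟨hconn, h.induce _⟩).2
    omega
  simpa using reachable_deleteEdges_of_not_isAcyclic hcyclic (by simpa using hacyc)

lemma reachable_of_flip {H G₁ G₂ : SimpleGraph V} {p q r w v : V}
    (h₁ : G₁.deleteEdges {s(p, q)} ≤ H) (h₂ : G₂.deleteEdges {s(r, w)} ≤ H)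
    (hqr : H.Adj q r) (hwp : H.Adj w p) (hrw : (G₂.deleteEdges {s(r, w)}).Reachable r w)
    (hv : G₁.Reachable v p ∨ G₂.Reachable v r) : H.Reachable q v := by
  have hqp : H.Reachable q p := hqr.reachable.trans ((hrw.mono h₂).trans hwp.reachable)
  rcases hv with hv | hv
  · rcases hv.deleteEdges_or q with h | h
    · exact hqp.trans (h.mono h₁).symm
    · exact (h.mono h₁).symm
  · rcases hv.deleteEdges_or w with h | h
    · exact hqr.reachable.trans (h.mono h₂).symm
    · exact hqr.reachable.trans ((hrw.mono h₂).trans (h.mono h₂).symm)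

end SimpleGraph

lemma connected_induce_flipEdges {V : Type*} {A B : Set (Sym2 V)} {p q r w : V}
    (hDisj : Disjoint A B) (hVDisj : Disjoint (edgeSupport A) (edgeSupport B))
    (hA : ((fromEdgeSet A).induce (edgeSupport A)).Connected)
    (hB : ((fromEdgeSet B).induce (edgeSupport B)).Connected)
    (he1 : s(p, q) ∈ A) (he2 : s(r, w) ∈ B)
    (hrw : (fromEdgeSet (B \ {s(r, w)})).Reachable r w) :
    ((fromEdgeSet (flipEdges (A ∪ B) p q r w)).induce
      (edgeSupport A ∪ edgeSupport B)).Connected := by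
  have hpA := left_mem_edgeSupport he1
  have hqA := right_mem_edgeSupport he1
  have hrB := left_mem_edgeSupport he2
  have hwB := right_mem_edgeSupport he2
  refine connected_induce_of_forall_reachable ((support_fromEdgeSet_subset _).trans
    ((edgeSupport_flipEdges_subset (Or.inl he1) (Or.inr he2)).trans (edgeSupport_union A B).le))
    (Or.inl hqA) fun v hv => reachable_of_flip (hv := hv.imp
      (hA.reachable_of_induce · hpA) (hB.reachable_of_induce · hrB))
      ?_ ?_ ?_ ?_ (by simpa using hrw)
  · rw [deleteEdges_fromEdgeSet]
    exact fromEdgeSet_mono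
      (diff_subset_flipEdges_left Set.subset_union_left (hDisj.notMem_of_mem_right he2))
  · rw [deleteEdges_fromEdgeSet]
    exact fromEdgeSet_mono
      (diff_subset_flipEdges_right Set.subset_union_right (hDisj.notMem_of_mem_left he1))
  · exact (fromEdgeSet_adj _).mpr ⟨mem_flipEdges_left, hVDisj.ne_of_mem hqA hrB⟩
  · exact (fromEdgeSet_adj _).mpr ⟨mem_flipEdges_right, (hVDisj.ne_of_mem hpA hwB).symm⟩

theorem flip_alternating_four_cycle_tree_general
    {V : Type*} [Fintype V]
    (G : SimpleGraph V) (T A B : Set (Sym2 V))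
    (hTG : T ⊆ G.edgeSet)
    (hUnion : A ∪ B = T) (hDisj : Disjoint A B)
    (hVDisj : Disjoint (edgeSupport A) (edgeSupport B))
    -- `A` induces a tree on the vertices it covers
    (hATree : ((SimpleGraph.fromEdgeSet A).induce (edgeSupport A)).IsTree)
    -- `B` induces a connected graph on the vertices it covers, with exactly one cycle
    (hBConn : ((SimpleGraph.fromEdgeSet B).induce (edgeSupport B)).Connected)
    (hBCard : B.ncard = (edgeSupport B).ncard)
    -- a 4-cycle `p q r w` of `G` ...
    (p q r w : V)
    (hpq : p ≠ q)
    -- ... whose edges alternate: `e1 = s(p,q) ∈ A ⊆ T`, `e2 = s(r,w) ∈ B ⊆ T`,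
    --     `f1 = s(q,r) ∉ T`, `f2 = s(w,p) ∉ T`
    (he1 : s(p, q) ∈ A) (he2 : s(r, w) ∈ B)
    (hf1 : s(q, r) ∉ T) (hf2 : s(w, p) ∉ T)
    -- `e2` lies on the unique cycle of `B`: removing it makes `B` acyclic
    (hCycleEdge : (SimpleGraph.fromEdgeSet (B \ {s(r, w)})).IsAcyclic) :
    ((SimpleGraph.fromEdgeSet ((T \ {s(p, q), s(r, w)}) ∪ {s(q, r), s(w, p)})).induce
      (edgeSupport A ∪ edgeSupport B)).IsTree := by
  subst hUnion
  have hT : Disjoint (A ∪ B) Sym2.diagSet :=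
    Set.subset_compl_iff_disjoint_right.mp (hTG.trans G.edgeSet_subset_compl_diagSet)
  have hpA := left_mem_edgeSupport he1
  have hqA := right_mem_edgeSupport he1
  have hrB := left_mem_edgeSupport he2
  have hwB := right_mem_edgeSupport he2
  have hAcard := ((isTree_induce_fromEdgeSet_iff (hT.mono_left Set.subset_union_left)
    subset_rfl).mp hATree).2
  have hrw := reachable_diff_of_ncard_edgeSupport_eq (hT.mono_left Set.subset_union_right)
    hBConn hBCard hCycleEdge
  have hf : s(q, r) ≠ s(w, p) := by
    rw [Ne, Sym2.eq_iff]
    rintro (⟨-, hrp⟩ | ⟨hqp, -⟩)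
    exacts [hVDisj.ne_of_mem hpA hrB hrp.symm, hpq hqp.symm]
  change ((fromEdgeSet (flipEdges (A ∪ B) p q r w)).induce _).IsTree
  rw [isTree_induce_fromEdgeSet_iff
      (disjoint_diagSet_flipEdges hT (hVDisj.ne_of_mem hqA hrB) (hVDisj.ne_of_mem hpA hwB).symm)
      ((edgeSupport_flipEdges_subset (Or.inl he1) (Or.inr he2)).trans (edgeSupport_union A B).le),
    ncard_flipEdges (Or.inl he1) (Or.inr he2) (hDisj.ne_of_mem he1 he2) hf1 hf2 hf,
    Set.ncard_union_eq hDisj, Set.ncard_union_eq hVDisj]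
  exact ⟨connected_induce_flipEdges hDisj hVDisj hATree.connected hBConn he1 he2 hrw, by omega⟩

/-- Flipping an alternating 4-cycle that joins a tree component `A` of an edge set `T`
with an edge on the unique cycle of the unicyclic component `B` turns `T` into a tree
on the vertex set `V(A) ∪ V(B)`. -/
theorem flip_alternating_four_cycle_tree
    {V : Type*} [Fintype V] [DecidableEq V]
    (G : SimpleGraph V) (T A B : Set (Sym2 V))
    (hTG : T ⊆ G.edgeSet)
    (hUnion : A ∪ B = T) (hDisj : Disjoint A B)
    (hVDisj : Disjoint (edgeSupport A) (edgeSupport B))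
    -- `A` induces a tree on the vertices it covers
    (hATree : ((SimpleGraph.fromEdgeSet A).induce (edgeSupport A)).IsTree)
    -- `B` induces a connected graph on the vertices it covers, with exactly one cycle
    (hBConn : ((SimpleGraph.fromEdgeSet B).induce (edgeSupport B)).Connected)
    (hBCard : B.ncard = (edgeSupport B).ncard)
    -- a 4-cycle `p q r w` of `G` ...
    (p q r w : V)
    (hpq : p ≠ q) (hpr : p ≠ r) (hpw : p ≠ w) (hqr : q ≠ r) (hqw : q ≠ w) (hrw : r ≠ w)
    (hGpq : G.Adj p q) (hGqr : G.Adj q r) (hGrw : G.Adj r w) (hGwp : G.Adj w p)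
    -- ... whose edges alternate: `e1 = s(p,q) ∈ A ⊆ T`, `e2 = s(r,w) ∈ B ⊆ T`,
    --     `f1 = s(q,r) ∉ T`, `f2 = s(w,p) ∉ T`
    (he1 : s(p, q) ∈ A) (he2 : s(r, w) ∈ B)
    (hf1 : s(q, r) ∉ T) (hf2 : s(w, p) ∉ T)
    -- `e2` lies on the unique cycle of `B`: removing it makes `B` acyclic
    (hCycleEdge : (SimpleGraph.fromEdgeSet (B \ {s(r, w)})).IsAcyclic) :
    ((SimpleGraph.fromEdgeSet ((T \ {s(p, q), s(r, w)}) ∪ {s(q, r), s(w, p)})).induce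
      (edgeSupport A ∪ edgeSupport B)).IsTree :=
  flip_alternating_four_cycle_tree_general G T A B hTG hUnion hDisj hVDisj hATree hBConn hBCard p q
    r w hpq he1 he2 hf1 hf2 hCycleEdge
end

section
/- Let T be a finite tree whose vertex set is partitioned into two sets X and Y such that every edge of T joins a vertex of X to a vertex of Y, and suppose every vertex of Y has degree exactly 2 in T. Let f ∈ X be a leaf of T (a vertex of degree 1). Then T contains a perfect matching between Y and X \ {f}; that is, there is a set M of edges of T such that every vertex of Y is incident to exactly one edge of M, every vertex of X \ {f} is incident to exactly one edge of M, and f is incident to no edge of M. In particular |X| = |Y| + 1. -/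
open SimpleGraph

/-- A finite tree bipartitioned into `X` and `Y`, where every vertex of `Y` has degree
exactly `2`, contains, for every leaf `f ∈ X`, a perfect matching between `Y` and
`X \ {f}`; moreover `|X| = |Y| + 1`. -/
theorem tree_bipartite_degree_two_matching
    {V : Type*} [Fintype V] [DecidableEq V]
    (T : SimpleGraph V) (hT : T.IsTree)
    (X Y : Set V) (hcover : X ∪ Y = Set.univ) (hdisj : Disjoint X Y)
    (hbip : ∀ u v : V, T.Adj u v → ((u ∈ X ∧ v ∈ Y) ∨ (u ∈ Y ∧ v ∈ X)))
    (hdeg : ∀ y ∈ Y, (T.neighborSet y).ncard = 2)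
    (f : V) (hf : f ∈ X) (hleaf : (T.neighborSet f).ncard = 1) :
    (∃ M : Set (Sym2 V), M ⊆ T.edgeSet ∧
      (∀ y ∈ Y, ∃! e, e ∈ M ∧ y ∈ e) ∧
      (∀ x ∈ X, x ≠ f → ∃! e, e ∈ M ∧ x ∈ e) ∧
      (∀ e ∈ M, f ∉ e)) ∧
    X.ncard = Y.ncard + 1 := by
  classical
  have hconn : T.Connected := hT.isConnected
  have hXY : ∀ v : V, v ∈ X ∨ v ∈ Y := by
    intro v
    have : v ∈ X ∪ Y := hcover ▸ Set.mem_univ v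
    exact this
  have hnot : ∀ v : V, v ∈ X → v ∈ Y → False := by
    intro v h1 h2
    exact hdisj.ne_of_mem h1 h2 rfl
  have hflip : ∀ u v : V, T.Adj u v → (u ∈ X ↔ v ∉ X) := by
    intro u v huv
    rcases hbip u v huv with ⟨hu, hv⟩ | ⟨hu, hv⟩
    · exact ⟨fun _ hvX => hnot v hvX hv, fun _ => hu⟩
    · exact ⟨fun huX => (hnot u huX hu).elim, fun hvnX => (hvnX hv).elim⟩
  -- parity along walks
  have hclass : ∀ {a b : V} (w : T.Walk a b), ((a ∈ X) ↔ (b ∈ X)) ↔ Even w.length := by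
    intro a b w
    induction w with
    | nil => simp
    | @cons a c b h p ih =>
      have hac : a ∈ X ↔ c ∉ X := hflip a c h
      rw [Walk.length_cons, Nat.even_add_one, ← ih]
      tauto
  have hparity : ∀ v : V, (v ∈ X ↔ Even (T.dist f v)) := by
    intro v
    obtain ⟨w, hw⟩ := hconn.exists_walk_length_eq_dist f v
    have := hclass w
    rw [hw] at this
    tauto
  -- adjacent vertices have distances from f differing by exactly one
  have hadjdist : ∀ u v : V, T.Adj u v →
      T.dist f u + 1 = T.dist f v ∨ T.dist f v + 1 = T.dist f u := by
    intro u v huv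
    have h1 : T.dist f v ≤ T.dist f u + 1 := by
      obtain ⟨w, hw⟩ := hconn.exists_walk_length_eq_dist f u
      have := dist_le (w.concat huv)
      rwa [Walk.length_concat, hw] at this
    have h2 : T.dist f u ≤ T.dist f v + 1 := by
      obtain ⟨w, hw⟩ := hconn.exists_walk_length_eq_dist f v
      have := dist_le (w.concat huv.symm)
      rwa [Walk.length_concat, hw] at this
    have hne : T.dist f u ≠ T.dist f v := by
      intro h
      have hP := hparity u
      have hQ := hparity v
      have := hflip u v huv
      rw [h] at hP
      tauto
    omega
  -- vertices on a walk from f are within its length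
  have hsupp : ∀ {b : V} (w : T.Walk f b) (x : V), x ∈ w.support →
      T.dist f x ≤ w.length := by
    intro b w x hx
    calc T.dist f x ≤ (w.takeUntil x hx).length := dist_le _
      _ ≤ w.length := Walk.length_takeUntil_le w hx
  -- parent existence and uniqueness
  have hparent : ∀ v : V, v ≠ f → ∃ u, (T.Adj u v ∧ T.dist f u + 1 = T.dist f v) ∧
      ∀ u', T.Adj u' v ∧ T.dist f u' + 1 = T.dist f v → u' = u := by
    intro v hv
    have hd : T.dist v f ≠ 0 := fun h => hv ((hconn.dist_eq_zero_iff).mp h)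
    obtain ⟨w, hw⟩ := exists_walk_of_dist_ne_zero hd
    have hex : ∃ u, T.Adj u v ∧ T.dist f u + 1 = T.dist f v := by
      cases w with
      | nil => exact absurd rfl hv
      | @cons _ c _ h p =>
        refine ⟨c, h.symm, ?_⟩
        have hle1 : T.dist f c ≤ p.length := by
          have := dist_le p.reverse
          rwa [Walk.length_reverse] at this
        have hlen : p.length + 1 = T.dist v f := by simpa using hw
        rw [SimpleGraph.dist_comm] at hlen
        have h1 : T.dist f v ≤ T.dist f c + 1 := by
          obtain ⟨w', hw'⟩ := hconn.exists_walk_length_eq_dist f c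
          have := dist_le (w'.concat h.symm)
          rwa [Walk.length_concat, hw'] at this
        omega
    obtain ⟨u, hu⟩ := hex
    refine ⟨u, hu, ?_⟩
    intro u' hu'
    by_contra hne
    obtain ⟨w1, hw1⟩ := hconn.exists_walk_length_eq_dist f u'
    obtain ⟨w2, hw2⟩ := hconn.exists_walk_length_eq_dist f u
    have hv1 : v ∉ w1.bypass.support := by
      intro hmem
      have h1 := hsupp w1.bypass v hmem
      have h2 := Walk.length_bypass_le w1
      omega
    have hv2 : v ∉ w2.bypass.support := by
      intro hmem
      have h1 := hsupp w2.bypass v hmem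
      have h2 := Walk.length_bypass_le w2
      omega
    have hp1 : (w1.bypass.concat hu'.1).IsPath := by
      rw [← Walk.isPath_reverse_iff, Walk.reverse_concat, Walk.cons_isPath_iff]
      exact ⟨(Walk.bypass_isPath w1).reverse,
        by simpa [Walk.support_reverse] using hv1⟩
    have hp2 : (w2.bypass.concat hu.1).IsPath := by
      rw [← Walk.isPath_reverse_iff, Walk.reverse_concat, Walk.cons_isPath_iff]
      exact ⟨(Walk.bypass_isPath w2).reverse,
        by simpa [Walk.support_reverse] using hv2⟩
    have heq : w1.bypass.concat hu'.1 = w2.bypass.concat hu.1 :=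
      (hT.existsUnique_path f v).unique hp1 hp2
    obtain ⟨huv', -⟩ := Walk.concat_inj heq
    exact hne huv'
  choose! pa hpa hpau using hparent
  -- basic facts
  have hYnef : ∀ y ∈ Y, y ≠ f := fun y hy h => hnot f hf (h ▸ hy)
  have hpaY : ∀ x, x ∈ X → x ≠ f → pa x ∈ Y := by
    intro x hx hxf
    rcases hbip (pa x) x (hpa x hxf).1 with ⟨h1, h2⟩ | ⟨h1, h2⟩
    · exact absurd h2 (hnot x hx ·)
    · exact h1
  -- each y ∈ Y has a unique child
  have hchild : ∀ y ∈ Y, ∃ c, (c ∈ X ∧ c ≠ f ∧ pa c = y) ∧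
      ∀ c', c' ≠ f ∧ pa c' = y → c' = c := by
    intro y hy
    have hyf : y ≠ f := hYnef y hy
    obtain ⟨a, b, hab, hN⟩ := Set.ncard_eq_two.mp (hdeg y hy)
    have hpamem : pa y ∈ T.neighborSet y := (hpa y hyf).1.symm
    set c : V := if pa y = a then b else a with hc
    have hcmem : c ∈ T.neighborSet y := by
      rw [hN]
      by_cases h : pa y = a <;> simp [hc, h]
    have hpam : pa y = a ∨ pa y = b := by
      rw [hN] at hpamem
      simpa using hpamem
    have hcne : c ≠ pa y := by
      by_cases h'' : pa y = a
      · rw [hc, if_pos h'', h'']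
        exact fun h => hab h.symm
      · rw [hc, if_neg h'']
        rcases hpam with h' | h'
        · exact absurd h' h''
        · rw [h']
          exact hab
    have hadj : T.Adj y c := hcmem
    have hdc : T.dist f y + 1 = T.dist f c := by
      rcases hadjdist y c hadj with h | h
      · exact h
      · exact absurd (hpau y hyf c ⟨hadj.symm, h⟩) hcne
    have hcf : c ≠ f := by
      intro h
      rw [h] at hdc
      simp [SimpleGraph.dist_self] at hdc
    have hpac : pa c = y := (hpau c hcf y ⟨hadj, hdc⟩).symm
    have hcX : c ∈ X := by
      rcases hbip y c hadj with ⟨h1, h2⟩ | ⟨h1, h2⟩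
      · exact absurd h1 (hnot y · hy)
      · exact h2
    refine ⟨c, ⟨hcX, hcf, hpac⟩, ?_⟩
    intro c' ⟨hc'f, hc'pa⟩
    have hadj' : T.Adj y c' := by
      have := (hpa c' hc'f).1
      rwa [hc'pa] at this
    have hdc' : T.dist f y + 1 = T.dist f c' := by
      have := (hpa c' hc'f).2
      rwa [hc'pa] at this
    have hc'mem : c' ∈ T.neighborSet y := hadj'
    have hc'ne : c' ≠ pa y := by
      intro h
      have := (hpa y hyf).2
      rw [← h] at this
      omega
    rw [hN] at hc'mem
    have hc'ab : c' = a ∨ c' = b := by simpa using hc'mem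
    by_cases h'' : pa y = a
    · have hcb : c = b := if_pos h''
      rcases hc'ab with h | h
      · exact absurd (h.trans h''.symm) hc'ne
      · rw [h, hcb]
    · have hpb : pa y = b := by
        rcases hpam with h' | h'
        · exact absurd h' h''
        · exact h'
      have hca : c = a := if_neg h''
      rcases hc'ab with h | h
      · rw [h, hca]
      · exact absurd (h.trans hpb.symm) hc'ne
  -- the matching
  set M : Set (Sym2 V) := (fun x => s(pa x, x)) '' (X \ {f}) with hM
  have hmemM : ∀ e ∈ M, ∃ x, x ∈ X ∧ x ≠ f ∧ e = s(pa x, x) := by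
    intro e he
    obtain ⟨x, hx, rfl⟩ := he
    exact ⟨x, hx.1, hx.2, rfl⟩
  refine ⟨⟨M, ?_, ?_, ?_, ?_⟩, ?_⟩
  · -- M ⊆ edgeSet
    intro e he
    obtain ⟨x, hx, hxf, rfl⟩ := hmemM e he
    exact (hpa x hxf).1
  · -- every y ∈ Y in exactly one edge
    intro y hy
    obtain ⟨c, ⟨hcX, hcf, hpac⟩, hcu⟩ := hchild y hy
    refine ⟨s(pa c, c), ⟨⟨c, ⟨hcX, hcf⟩, rfl⟩, by simp [hpac]⟩, ?_⟩
    intro e ⟨heM, hye⟩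
    obtain ⟨x, hx, hxf, rfl⟩ := hmemM e heM
    rcases Sym2.mem_iff.mp hye with h | h
    · rw [hcu x ⟨hxf, h.symm⟩]
    · exact absurd (h ▸ hy) (hnot x hx ·)
  · -- every x ∈ X \ {f} in exactly one edge
    intro x hx hxf
    refine ⟨s(pa x, x), ⟨⟨x, ⟨hx, hxf⟩, rfl⟩, by simp⟩, ?_⟩
    intro e ⟨heM, hxe⟩
    obtain ⟨x', hx', hx'f, rfl⟩ := hmemM e heM
    rcases Sym2.mem_iff.mp hxe with h | h
    · exact absurd (h ▸ hpaY x' hx' hx'f) (hnot x hx ·)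
    · rw [h]
  · -- f in no edge
    intro e heM hfe
    obtain ⟨x, hx, hxf, rfl⟩ := hmemM e heM
    rcases Sym2.mem_iff.mp hfe with h | h
    · exact hnot f hf (h ▸ hpaY x hx hxf)
    · exact hxf h.symm
  · -- cardinality
    have hbij : Set.BijOn pa (X \ {f}) Y := by
      refine ⟨fun x hx => hpaY x hx.1 hx.2, ?_, ?_⟩
      · intro x1 hx1 x2 hx2 hpe
        have hy : pa x1 ∈ Y := hpaY x1 hx1.1 hx1.2
        obtain ⟨c, -, hcu⟩ := hchild (pa x1) hy
        rw [hcu x1 ⟨hx1.2, rfl⟩, hcu x2 ⟨hx2.2, hpe.symm⟩]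
      · intro y hy
        obtain ⟨c, ⟨hcX, hcf, hpac⟩, -⟩ := hchild y hy
        exact ⟨c, ⟨hcX, hcf⟩, hpac⟩
    have h1 : (X \ {f}).ncard = Y.ncard := by
      rw [← hbij.image_eq, Set.ncard_image_of_injOn hbij.injOn]
    have h2 := Set.ncard_diff_singleton_add_one hf (Set.toFinite X)
    omega
end

section
/- Let G = (V, E) be a Laman graph with |V| ≥ 3, let (x, y) ∈ E be an edge of G and let z ∈ V \ {x, y} be a third vertex. Let G' be the graph obtained from G by removing the edge (x, y) and adding one new vertex v together with the three edges (v, x), (v, y), and (v, z). Then G' is a Laman graph. -/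
/-- A Laman graph: a connected graph with `|E| = 2|V| - 3` such that every subset `W`
of at least two vertices induces at most `2|W| - 3` edges. -/
def IsLaman {V : Type*} [Fintype V] (G : SimpleGraph V) : Prop :=
  G.Connected ∧ G.edgeSet.ncard = 2 * Fintype.card V - 3 ∧
    ∀ W : Set V, 2 ≤ W.ncard →
      {e ∈ G.edgeSet | ∀ v ∈ e, v ∈ W}.ncard ≤ 2 * W.ncard - 3

/-! The step deletes one edge and adds three, so the edge count rises by two, and connectivity
survives because the deleted edge `xy` is bypassed through the new vertex. For sparsity, a vertex
set avoiding the new vertex spans no more edges than it did in `G`. A set `W₀ ∪ {new}` with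
`|W₀| ≥ 2` spans at most `2|W₀| - 3` old edges, one fewer if `x, y ∈ W₀` (as `xy` is gone), plus
the new edges to `{x, y, z} ∩ W₀`, of which there are at most two unless `x, y ∈ W₀`: in total at
most `2|W₀| - 1 = 2|W₀ ∪ {new}| - 3`. -/

namespace Set

variable {α : Type*}

lemma ncard_pair_le (a b : α) : ({a, b} : Set α).ncard ≤ 2 :=
  (ncard_insert_le a {b}).trans (by simp)

lemma ncard_triple_le (a b c : α) : ({a, b, c} : Set α).ncard ≤ 3 :=
  (ncard_insert_le a {b, c}).trans (by have := ncard_pair_le b c; omega)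

variable {W : Set (Option α)}

lemma ncard_preimage_some_of_none_notMem (h : none ∉ W) : (some ⁻¹' W).ncard = W.ncard :=
  ncard_preimage_of_injective_subset_range (Option.some_injective α) fun
    | none, hu => absurd hu h
    | some a, _ => ⟨a, rfl⟩

lemma ncard_preimage_some_add_one_of_none_mem [Finite α] (h : none ∈ W) :
    (some ⁻¹' W).ncard + 1 = W.ncard := by
  have hW : W = insert none (some '' (some ⁻¹' W)) := by
    ext (_ | a) <;> simp [h]
  conv_rhs => rw [hW]
  rw [ncard_insert_of_notMem (by simp), ncard_image_of_injective _ (Option.some_injective α)]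

end Set

namespace SimpleGraph

variable {V : Type*} (G : SimpleGraph V)

def edgesWithin (W : Set V) : Set (Sym2 V) := {e ∈ G.edgeSet | ∀ v ∈ e, v ∈ W}

def IsLamanSparse : Prop :=
  ∀ W : Set V, 2 ≤ W.ncard → (G.edgesWithin W).ncard ≤ 2 * W.ncard - 3

variable {G}

@[simp]
lemma edgesWithin_univ : G.edgesWithin Set.univ = G.edgeSet := by
  simp [edgesWithin]

lemma edgesWithin_deleteEdges (s : Set (Sym2 V)) (W : Set V) :
    (G.deleteEdges s).edgesWithin W = G.edgesWithin W \ s := by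
  ext e
  simp only [edgesWithin, edgeSet_deleteEdges, Set.mem_sdiff, Set.mem_ofPred_eq]
  tauto

lemma mk_mem_edgesWithin {a b : V} {W : Set V} :
    s(a, b) ∈ G.edgesWithin W ↔ G.Adj a b ∧ a ∈ W ∧ b ∈ W := by
  simp [edgesWithin]

lemma two_le_ncard_of_mem_edgesWithin {e : Sym2 V} {W : Set V} (hW : W.Finite)
    (he : e ∈ G.edgesWithin W) : 2 ≤ W.ncard := by
  induction e using Sym2.inductionOn with
  | hf a b =>
    obtain ⟨hab, ha, hb⟩ := mk_mem_edgesWithin.1 he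
    calc 2 = ({a, b} : Set V).ncard := (Set.ncard_pair hab.ne).symm
      _ ≤ W.ncard := Set.ncard_le_ncard (Set.pair_subset ha hb) hW

lemma edgesWithin_option (H : SimpleGraph (Option V)) (W : Set (Option V)) :
    H.edgesWithin W =
      Sym2.map some '' (H.comap some).edgesWithin (some ⁻¹' W) ∪
        (fun a => s(none, some a)) '' {a ∈ some ⁻¹' W | none ∈ W ∧ H.Adj none (some a)} := by
  ext e
  induction e using Sym2.inductionOn with
  | hf u v =>
    cases u <;> cases v
    case some.some a b =>
      rw [← Sym2.map_mk, Set.mem_union,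
        (Sym2.map.injective (Option.some_injective V)).mem_set_image]
      simp [mk_mem_edgesWithin]
    all_goals simp [mk_mem_edgesWithin, Sym2.exists, H.adj_comm] <;> tauto

lemma ncard_edgesWithin_option [Finite V] (H : SimpleGraph (Option V)) (W : Set (Option V)) :
    (H.edgesWithin W).ncard =
      ((H.comap some).edgesWithin (some ⁻¹' W)).ncard +
        {a ∈ some ⁻¹' W | none ∈ W ∧ H.Adj none (some a)}.ncard := by
  have hnone : Function.Injective fun a : V => s((none : Option V), some a) := by
    intro a b h
    simpa using h
  have hdisj : Disjoint (Sym2.map some '' (H.comap some).edgesWithin (some ⁻¹' W))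
      ((fun a => s(none, some a)) '' {a ∈ some ⁻¹' W | none ∈ W ∧ H.Adj none (some a)}) := by
    rw [Set.disjoint_left]
    rintro _ ⟨e, -, rfl⟩ ⟨a, -, h⟩
    induction e using Sym2.inductionOn with
    | hf b c => simp at h
  rw [edgesWithin_option, Set.ncard_union_eq hdisj,
    Set.ncard_image_of_injective _ (Sym2.map.injective (Option.some_injective V)),
    Set.ncard_image_of_injective _ hnone]

lemma Connected.of_option {G : SimpleGraph V} {H : SimpleGraph (Option V)} (hG : G.Connected)
    (hlift : ∀ a b, G.Adj a b → H.Reachable (some a) (some b)) (hnone : ∃ a, H.Adj none (some a)) :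
    H.Connected := by
  have hsome (a b : V) : H.Reachable (some a) (some b) := by
    simp only [reachable_iff_reflTransGen] at hlift ⊢
    exact ((reachable_iff_reflTransGen a b).1 (hG.preconnected a b)).lift' some hlift
  obtain ⟨c, hc⟩ := hnone
  have hfrom_none : ∀ u, H.Reachable none u
    | none => .rfl
    | some a => hc.reachable.trans (hsome c a)
  exact (connected_iff_exists_forall_reachable H).2 ⟨none, hfrom_none⟩

/-- The second summand counts the edges from the new vertex to `x`, `y`, `z`, so the left side is
the number of edges that `W ∪ {none}` spans after the Henneberg step. -/
lemma IsLamanSparse.ncard_edgesWithin_deleteEdges_add_le [Finite V] (hG : G.IsLamanSparse)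
    {x y z : V} (hxy : G.Adj x y) {W : Set V} (hW : W.Nonempty) :
    ((G.deleteEdges {s(x, y)}).edgesWithin W).ncard + {a ∈ W | a = x ∨ a = y ∨ a = z}.ncard ≤
      2 * W.ncard - 1 := by
  rw [edgesWithin_deleteEdges]
  have hnew_le_W : {a ∈ W | a = x ∨ a = y ∨ a = z}.ncard ≤ W.ncard :=
    Set.ncard_le_ncard (Set.sep_subset _ _)
  obtain hW2 | hW2 := lt_or_ge W.ncard 2
  · have hempty : G.edgesWithin W = ∅ :=
      Set.eq_empty_of_forall_notMem fun e he ↦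
        hW2.not_ge (two_le_ncard_of_mem_edgesWithin W.toFinite he)
    have := hW.ncard_pos
    simp only [hempty, Set.empty_sdiff, Set.ncard_empty]
    omega
  have hE := hG W hW2
  by_cases hxyW : x ∈ W ∧ y ∈ W
  · have hdel := Set.ncard_sdiff_singleton_add_one (mk_mem_edgesWithin.2 ⟨hxy, hxyW⟩)
    have hnew_le : {a ∈ W | a = x ∨ a = y ∨ a = z}.ncard ≤ 3 :=
      (Set.ncard_le_ncard fun a ha ↦ ha.2).trans (Set.ncard_triple_le x y z)
    omega
  · have hdel : (G.edgesWithin W \ {s(x, y)}).ncard ≤ (G.edgesWithin W).ncard :=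
      Set.ncard_le_ncard Set.sdiff_subset
    have hnew_le : {a ∈ W | a = x ∨ a = y ∨ a = z}.ncard ≤ 2 := by
      rcases not_and_or.1 hxyW with hx | hy
      · refine (Set.ncard_le_ncard ?_).trans (Set.ncard_pair_le y z)
        rintro a ⟨ha, rfl | h⟩
        · exact absurd ha hx
        · exact h
      · refine (Set.ncard_le_ncard ?_).trans (Set.ncard_pair_le x z)
        rintro a ⟨ha, rfl | rfl | rfl⟩
        · exact .inl rfl
        · exact absurd ha hy
        · exact .inr rfl
    omega

lemma Connected.henneberg_two {G : SimpleGraph V} {H : SimpleGraph (Option V)} {x y : V}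
    (hG : G.Connected) (hcomap : H.comap some = G.deleteEdges {s(x, y)})
    (hx : H.Adj none (some x)) (hy : H.Adj none (some y)) : H.Connected := by
  refine hG.of_option (fun a b hab ↦ ?_) ⟨x, hx⟩
  by_cases h : s(a, b) = s(x, y)
  · have hnone : ∀ c, c = x ∨ c = y → H.Reachable none (some c) := by
      rintro c (rfl | rfl)
      exacts [hx.reachable, hy.reachable]
    rw [Sym2.eq_iff] at h
    exact (hnone a (by tauto)).symm.trans (hnone b (by tauto))
  · have hab' : (H.comap some).Adj a b := by simp [hcomap, hab, h]
    exact Adj.reachable (G := H) hab'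

lemma ncard_edgeSet_henneberg_two [Finite V] {G : SimpleGraph V} {H : SimpleGraph (Option V)}
    {x y z : V} (hxy : G.Adj x y) (hzx : z ≠ x) (hzy : z ≠ y)
    (hcomap : H.comap some = G.deleteEdges {s(x, y)})
    (hnbr : ∀ a, H.Adj none (some a) ↔ a = x ∨ a = y ∨ a = z) :
    H.edgeSet.ncard = G.edgeSet.ncard + 2 := by
  have hdel := Set.ncard_sdiff_singleton_add_one (G.mem_edgeSet.2 hxy)
  have hthree : {a | a = x ∨ a = y ∨ a = z}.ncard = 3 :=
    Set.ncard_eq_three.2 ⟨x, y, z, hxy.ne, hzx.symm, hzy.symm, by ext; simp⟩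
  rw [← edgesWithin_univ, ncard_edgesWithin_option, hcomap, edgesWithin_deleteEdges,
    Set.preimage_univ, edgesWithin_univ]
  simp only [Set.mem_univ, true_and, hnbr, hthree]
  omega

lemma IsLamanSparse.henneberg_two [Finite V] {G : SimpleGraph V} {H : SimpleGraph (Option V)}
    {x y z : V} (hG : G.IsLamanSparse) (hxy : G.Adj x y)
    (hcomap : H.comap some = G.deleteEdges {s(x, y)})
    (hnbr : ∀ a, H.Adj none (some a) ↔ a = x ∨ a = y ∨ a = z) : H.IsLamanSparse := by
  intro W hW
  rw [ncard_edgesWithin_option, hcomap]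
  by_cases hnone : none ∈ W
  · have hcard := Set.ncard_preimage_some_add_one_of_none_mem hnone
    have hW₀ : (some ⁻¹' W).Nonempty := Set.nonempty_of_ncard_ne_zero (by omega)
    have := hG.ncard_edgesWithin_deleteEdges_add_le hxy (z := z) hW₀
    simp only [hnone, hnbr, true_and]
    omega
  · have hcard := Set.ncard_preimage_some_of_none_notMem hnone
    simp only [hnone, false_and, and_false, Set.ofPred_false, Set.ncard_empty, add_zero,
      edgesWithin_deleteEdges]
    calc _ ≤ (G.edgesWithin (some ⁻¹' W)).ncard := Set.ncard_le_ncard Set.sdiff_subset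
      _ ≤ 2 * W.ncard - 3 := hcard ▸ hG _ (hcard ▸ hW)

end SimpleGraph

/-- Henneberg operation H2: removing an edge `(x, y)` of a Laman graph and adding a new
vertex joined to `x`, `y` and a third vertex `z` yields a Laman graph. -/
theorem henneberg_two
    {V : Type*} [Fintype V]
    (G : SimpleGraph V) (hG : IsLaman G)
    (x y z : V) (hGxy : G.Adj x y) (hzx : z ≠ x) (hzy : z ≠ y)
    (G' : SimpleGraph (Option V))
    (hold : ∀ a b : V, G'.Adj (some a) (some b) ↔ (G.Adj a b ∧ s(a, b) ≠ s(x, y)))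
    (hnew : ∀ a : V, G'.Adj none (some a) ↔ (a = x ∨ a = y ∨ a = z)) :
    IsLaman G' := by
  obtain ⟨hconn, hcount, hsparse : G.IsLamanSparse⟩ := hG
  have hcomap : G'.comap some = G.deleteEdges {s(x, y)} := by
    ext a b
    simp [hold]
  have hcard : 1 < Fintype.card V := Fintype.one_lt_card_iff.2 ⟨x, y, hGxy.ne⟩
  refine ⟨hconn.henneberg_two hcomap ((hnew x).2 (.inl rfl)) ((hnew y).2 (.inr (.inl rfl))),
    ?_, hsparse.henneberg_two hGxy hcomap hnew⟩
  rw [SimpleGraph.ncard_edgeSet_henneberg_two hGxy hzx hzy hcomap hnew, hcount,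
    Fintype.card_option]
  omega
end

section
/- Let G = (V, E) be a finite simple graph and let W ⊆ V be a subset with |W| ≥ 2 and |E(W)| ≥ 2|W| − 2 that is inclusion-minimal with this property, i.e., no proper subset W' ⊊ W with |W'| ≥ 2 satisfies |E(W')| ≥ 2|W'| − 2. Then |W| ≥ 4 and the subgraph G(W) induced by W is 2-connected: G(W) is connected, and for every vertex w ∈ W the subgraph induced by W \ {w} is connected. -/
/-! Call `W = A ∪ B` a separation if `A, B ⊊ W`, `|A ∩ B| ≤ 1` and no edge joins `A \ B` to
`B \ A`; then `|E(W)| ≤ |E(A)| + |E(B)|`. Minimality gives `|E(S)| ≤ 2|S| - 3` for proper `S` with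
`|S| ≥ 2`, and `|E(S)| = 0` for singletons; as `|A| + |B| = |W| + |A ∩ B|`, and both sides have
two vertices when they share one, this forces `|E(W)| ≤ 2|W| - 4`. So there is no separation,
while a disconnection of `G(W)` or of `G(W \ {w})` would give one. Small `W` are excluded by
`|E(W)| ≤ C(|W|, 2)`. -/

namespace SimpleGraph

variable {V : Type*} {G : SimpleGraph V}

def inducedEdgeSet (G : SimpleGraph V) (S : Set V) : Set (Sym2 V) :=
  {e ∈ G.edgeSet | ∀ v ∈ e, v ∈ S}

@[simp]
theorem mk_mem_inducedEdgeSet {S : Set V} {x y : V} :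
    s(x, y) ∈ G.inducedEdgeSet S ↔ G.Adj x y ∧ x ∈ S ∧ y ∈ S := by
  simp [inducedEdgeSet]

theorem ncard_inducedEdgeSet_le_choose_two [Finite V] (S : Set V) :
    (G.inducedEdgeSet S).ncard ≤ S.ncard.choose 2 := by
  classical
  have := Fintype.ofFinite V
  have hmap : G.inducedEdgeSet S =
      (G.induce S).edgeFinset.map (Function.Embedding.subtype (· ∈ S)).sym2Map := by
    rw [map_edgeFinset_induce]
    ext e
    simp [inducedEdgeSet, Set.mem_sym2_iff_subset, Set.subset_def]
  rw [hmap, Set.ncard_coe_finset, Finset.card_map, ← Nat.card_coe_set_eq, Nat.card_eq_fintype_card]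
  exact card_edgeFinset_le_card_choose_two

theorem ncard_inducedEdgeSet_union_le [Finite V] {A B : Set V}
    (hno : ∀ x ∈ A \ B, ∀ y ∈ B \ A, ¬G.Adj x y) :
    (G.inducedEdgeSet (A ∪ B)).ncard ≤
      (G.inducedEdgeSet A).ncard + (G.inducedEdgeSet B).ncard := by
  have hsub : G.inducedEdgeSet (A ∪ B) ⊆ G.inducedEdgeSet A ∪ G.inducedEdgeSet B := by
    intro e he
    induction e using Sym2.ind with
    | _ x y =>
      have := hno x
      have := hno y
      have := G.adj_symm (u := x) (v := y)
      simp only [Set.mem_union, mk_mem_inducedEdgeSet, Set.mem_sdiff] at *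
      tauto
  exact (Set.ncard_le_ncard hsub).trans (Set.ncard_union_le _ _)

theorem induce_connected_of_forall_exists_adj {S : Set V} (hS : S.Nonempty)
    (h : ∀ A ⊆ S, A.Nonempty → (S \ A).Nonempty → ∃ x ∈ A, ∃ y ∈ S \ A, G.Adj x y) :
    (G.induce S).Connected := by
  obtain ⟨u, hu⟩ := hS
  rw [connected_iff_exists_forall_reachable]
  refine ⟨⟨u, hu⟩, fun v => ?_⟩
  by_contra hv
  let A : Set V := Subtype.val '' {x | (G.induce S).Reachable ⟨u, hu⟩ x}
  obtain ⟨_, ⟨x, hx, rfl⟩, y, ⟨hyS, hyA⟩, hxy⟩ := h A (by simp [A]) ⟨u, ⟨u, hu⟩, .rfl, rfl⟩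
    ⟨v, v.2, fun ⟨v', hv', hvv'⟩ => hv (Subtype.ext hvv' ▸ hv')⟩
  exact hyA ⟨⟨y, hyS⟩, hx.trans (Adj.reachable (G := G.induce S) hxy), rfl⟩

section Minimal

variable [Finite V] {W : Set V}

theorem ncard_inducedEdgeSet_add_two_le
    (hmin : ∀ W' : Set V, W' ⊂ W → 2 ≤ W'.ncard →
      (G.inducedEdgeSet W').ncard < 2 * W'.ncard - 2)
    {S : Set V} (hSW : S ⊂ W) (hS : S.Nonempty) :
    (G.inducedEdgeSet S).ncard + 2 ≤ 2 * S.ncard := by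
  rcases (show S.ncard = 1 ∨ 2 ≤ S.ncard by have := hS.ncard_pos; omega) with h1 | h2
  · have := G.ncard_inducedEdgeSet_le_choose_two S
    rw [h1, Nat.choose_eq_zero_of_lt one_lt_two] at this
    omega
  · have := hmin S hSW h2
    omega

theorem exists_adj_sdiff_of_union_eq
    (hdense : 2 * W.ncard - 2 ≤ (G.inducedEdgeSet W).ncard)
    (hmin : ∀ W' : Set V, W' ⊂ W → 2 ≤ W'.ncard →
      (G.inducedEdgeSet W').ncard < 2 * W'.ncard - 2)
    {A B : Set V} (hA : A ⊂ W) (hB : B ⊂ W) (hAB : A ∪ B = W) (hinter : (A ∩ B).ncard ≤ 1) :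
    ∃ x ∈ A \ B, ∃ y ∈ B \ A, G.Adj x y := by
  by_contra! hno
  have hcover := G.ncard_inducedEdgeSet_union_le hno
  have hcard := Set.ncard_union_add_ncard_inter A B
  rw [hAB] at hcover hcard
  have hA_card : (A ∩ B).ncard < A.ncard := Set.ncard_lt_ncard <|
    Set.inter_ssubset_left_iff.2 fun hAB' => hB.ne (by rwa [Set.union_eq_right.2 hAB'] at hAB)
  have hB_card : (A ∩ B).ncard < B.ncard := Set.ncard_lt_ncard <|
    Set.inter_ssubset_right_iff.2 fun hBA => hA.ne (by rwa [Set.union_eq_left.2 hBA] at hAB)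
  interval_cases h : (A ∩ B).ncard
  · have := ncard_inducedEdgeSet_add_two_le hmin hA (Set.nonempty_of_ncard_ne_zero (by omega))
    have := ncard_inducedEdgeSet_add_two_le hmin hB (Set.nonempty_of_ncard_ne_zero (by omega))
    omega
  · have := hmin A hA (by omega)
    have := hmin B hB (by omega)
    omega

theorem induce_connected_of_minimal (hW : W.Nonempty)
    (hdense : 2 * W.ncard - 2 ≤ (G.inducedEdgeSet W).ncard)
    (hmin : ∀ W' : Set V, W' ⊂ W → 2 ≤ W'.ncard →
      (G.inducedEdgeSet W').ncard < 2 * W'.ncard - 2) :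
    (G.induce W).Connected := by
  refine induce_connected_of_forall_exists_adj hW fun A hAW hA ⟨z, hzW, hzA⟩ => ?_
  obtain ⟨x, hx, y, hy, hxy⟩ := exists_adj_sdiff_of_union_eq hdense hmin
    (hAW.ssubset_of_mem_notMem hzW hzA) (hAW.sdiff_ssubset_of_nonempty hA)
    (Set.union_sdiff_cancel hAW) (by simp)
  exact ⟨x, hx.1, y, hy.1, hxy⟩

theorem induce_sdiff_singleton_connected_of_minimal
    (hdense : 2 * W.ncard - 2 ≤ (G.inducedEdgeSet W).ncard)
    (hmin : ∀ W' : Set V, W' ⊂ W → 2 ≤ W'.ncard →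
      (G.inducedEdgeSet W').ncard < 2 * W'.ncard - 2)
    {w : V} (hw : w ∈ W) (hW : (W \ {w}).Nonempty) :
    (G.induce (W \ {w})).Connected := by
  refine induce_connected_of_forall_exists_adj hW fun A hAW hA ⟨z, ⟨hzW, hzw⟩, hzA⟩ => ?_
  have hwA : w ∉ A := fun h => (hAW h).2 rfl
  have hAW' : A ⊆ W := hAW.trans Set.sdiff_subset
  obtain ⟨x, hx, y, hy, hxy⟩ := exists_adj_sdiff_of_union_eq (A := insert w A) (B := W \ A)
    hdense hmin
    ((Set.insert_subset hw hAW').ssubset_of_mem_notMem hzW (by simp_all))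
    (hAW'.sdiff_ssubset_of_nonempty hA)
    (by ext; grind)
    ((Set.ncard_le_ncard (t := {w}) (by intro; grind)).trans (Set.ncard_singleton w).le)
  exact ⟨x, by simp_all, y, by simp_all, hxy⟩

end Minimal

end SimpleGraph

theorem minimal_dense_two_connected_general
    {V : Type*} [Fintype V]
    (G : SimpleGraph V) (W : Set V)
    (hW : 2 ≤ W.ncard)
    (hdense : 2 * W.ncard - 2 ≤ {e ∈ G.edgeSet | ∀ v ∈ e, v ∈ W}.ncard)
    (hmin : ∀ W' : Set V, W' ⊂ W → 2 ≤ W'.ncard →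
      {e ∈ G.edgeSet | ∀ v ∈ e, v ∈ W'}.ncard < 2 * W'.ncard - 2) :
    4 ≤ W.ncard ∧ (G.induce W).Connected ∧
      ∀ w ∈ W, (G.induce (W \ {w})).Connected := by
  have h4 : 4 ≤ W.ncard := by
    have hchoose := hdense.trans (G.ncard_inducedEdgeSet_le_choose_two W)
    by_contra!
    interval_cases W.ncard <;> simp [Nat.choose] at hchoose
  refine ⟨h4, ?_, fun w hw => ?_⟩
  · exact SimpleGraph.induce_connected_of_minimal
      (Set.nonempty_of_ncard_ne_zero (by omega)) hdense hmin
  · refine SimpleGraph.induce_sdiff_singleton_connected_of_minimal hdense hmin hw ?_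
    exact Set.nonempty_of_ncard_ne_zero (by rw [Set.ncard_sdiff_singleton_of_mem hw]; omega)

/-- An inclusion-minimal vertex set `W` with `|W| ≥ 2` and `|E(W)| ≥ 2|W| - 2` has at
least four vertices and induces a `2`-connected subgraph. -/
theorem minimal_dense_two_connected
    {V : Type*} [Fintype V] [DecidableEq V]
    (G : SimpleGraph V) (W : Set V)
    (hW : 2 ≤ W.ncard)
    (hdense : 2 * W.ncard - 2 ≤ {e ∈ G.edgeSet | ∀ v ∈ e, v ∈ W}.ncard)
    (hmin : ∀ W' : Set V, W' ⊂ W → 2 ≤ W'.ncard →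
      {e ∈ G.edgeSet | ∀ v ∈ e, v ∈ W'}.ncard < 2 * W'.ncard - 2) :
    4 ≤ W.ncard ∧ (G.induce W).Connected ∧
      ∀ w ∈ W, (G.induce (W \ {w})).Connected :=
  minimal_dense_two_connected_general G W hW hdense hmin
end

section
/- Let V be a finite set and for each v ∈ V let L(v) ⊂ ℝ² be an L-shape: the union of a closed horizontal segment h(v) and a closed vertical segment s(v), each of positive length, whose intersection is a single point b(v) (the bend) that is an endpoint of both segments; the two endpoints of L(v) are the endpoint of h(v) other than b(v) and the endpoint of s(v) other than b(v). Suppose that: (a) for all distinct u, v ∈ V, the set L(u) ∩ L(v) is either empty or consists of a single point p such that p is an endpoint of one of the two L-shapes and is a point of the other L-shape that is neither one of its two endpoints nor its bend; and (b) the 2|V| endpoints of the L-shapes have pairwise distinct x-coordinates and pairwise distinct y-coordinates. Let G be the graph on vertex set V in which distinct u and v are adjacent if and only if L(u) ∩ L(v) ≠ ∅. Then for every subset W ⊆ V with |W| ≥ 2, the number of edges of the subgraph of G induced by W is at most 2|W| − 2. -/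
/-- An axis-aligned L-shape: a horizontal segment and a vertical segment of positive
length sharing exactly the bend point `bend`, which is an endpoint of both segments.
The two endpoints of the L-shape are `(hx, bend.2)` and `(bend.1, vy)`. -/
structure LShape where
  bend : ℝ × ℝ
  hx : ℝ
  vy : ℝ
  hx_ne : hx ≠ bend.1
  vy_ne : vy ≠ bend.2

/-- The point set of an L-shape. -/
def LShape.carrier (L : LShape) : Set (ℝ × ℝ) :=
  segment ℝ L.bend (L.hx, L.bend.2) ∪ segment ℝ L.bend (L.bend.1, L.vy)

/-- The endpoint of the horizontal segment other than the bend. -/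
def LShape.hEnd (L : LShape) : ℝ × ℝ := (L.hx, L.bend.2)

/-- The endpoint of the vertical segment other than the bend. -/
def LShape.vEnd (L : LShape) : ℝ × ℝ := (L.bend.1, L.vy)

lemma seg_comp {p a b : ℝ × ℝ} (h : p ∈ segment ℝ a b) :
    p.1 ∈ Set.uIcc a.1 b.1 ∧ p.2 ∈ Set.uIcc a.2 b.2 := by
  obtain ⟨s, t, hs, ht, hst, rfl⟩ := h
  constructor <;> rw [← segment_eq_uIcc]
  · exact ⟨s, t, hs, ht, hst, rfl⟩
  · exact ⟨s, t, hs, ht, hst, rfl⟩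

/-- A point of an L-shape which is neither the bend nor the vertical endpoint either
lies at the height of the horizontal segment, or is strictly inside the vertical
segment heightwise. -/
lemma interior_y {M : LShape} {p : ℝ × ℝ} (hp : p ∈ M.carrier)
    (hb : p ≠ M.bend) (hv : p ≠ M.vEnd) :
    p.2 = M.bend.2 ∨
    (p.2 ∈ Set.uIcc M.bend.2 M.vy ∧ p.2 ≠ M.bend.2 ∧ p.2 ≠ M.vy) := by
  rcases hp with h | h
  · left
    have := (seg_comp h).2
    simpa using this
  · right
    have h1 := (seg_comp h).1
    have h2 := (seg_comp h).2
    have hp1 : p.1 = M.bend.1 := by simpa using h1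
    refine ⟨by simpa using h2, ?_, ?_⟩
    · intro hE; exact hb (Prod.ext hp1 hE)
    · intro hE; exact hv (Prod.ext hp1 hE)

/-- If a family of L-shapes pairwise intersect in at most one point, every such point
being an endpoint of one shape and a non-endpoint, non-bend point of the other, and all
`2|V|` endpoints have pairwise distinct x-coordinates and pairwise distinct
y-coordinates, then the contact graph `G` satisfies `|E(W)| ≤ 2|W| - 2` for every
vertex subset `W` with `|W| ≥ 2`. -/
theorem lcontact_graph_sparse
    {V : Type*} [Fintype V] [DecidableEq V]
    (L : V → LShape)
    (hcontact : ∀ u v : V, u ≠ v →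
      (L u).carrier ∩ (L v).carrier = ∅ ∨
      ∃ p : ℝ × ℝ, (L u).carrier ∩ (L v).carrier = {p} ∧
        (((p = (L u).hEnd ∨ p = (L u).vEnd) ∧
            p ∈ (L v).carrier ∧ p ≠ (L v).hEnd ∧ p ≠ (L v).vEnd ∧ p ≠ (L v).bend) ∨
         ((p = (L v).hEnd ∨ p = (L v).vEnd) ∧
            p ∈ (L u).carrier ∧ p ≠ (L u).hEnd ∧ p ≠ (L u).vEnd ∧ p ≠ (L u).bend)))
    (hxinj : Function.Injective
      (fun vb : V × Bool => if vb.2 then ((L vb.1).vEnd).1 else ((L vb.1).hEnd).1))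
    (hyinj : Function.Injective
      (fun vb : V × Bool => if vb.2 then ((L vb.1).vEnd).2 else ((L vb.1).hEnd).2))
    (G : SimpleGraph V)
    (hG : ∀ u v : V, G.Adj u v ↔ u ≠ v ∧ ((L u).carrier ∩ (L v).carrier).Nonempty) :
    ∀ W : Set V, 2 ≤ W.ncard →
      {e ∈ G.edgeSet | ∀ x ∈ e, x ∈ W}.ncard ≤ 2 * W.ncard - 2 := by
  classical
  intro W hW
  obtain ⟨w0, hw0⟩ : W.Nonempty := Set.nonempty_of_ncard_ne_zero (by omega)
  -- endpoint map and y-coordinate map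
  set pt : V × Bool → ℝ × ℝ := fun vb => if vb.2 then (L vb.1).vEnd else (L vb.1).hEnd
    with hptdef
  set y : V × Bool → ℝ :=
    fun vb : V × Bool => if vb.2 then ((L vb.1).vEnd).2 else ((L vb.1).hEnd).2 with hydef
  have hy_pt : ∀ vb, y vb = (pt vb).2 := by
    rintro ⟨v, b⟩; cases b <;> simp [hydef, hptdef]
  -- the set of edges and the set of endpoints in W
  set S : Set (Sym2 V) := {e ∈ G.edgeSet | ∀ x ∈ e, x ∈ W} with hSdef
  set W' : Set (V × Bool) := {vb | vb.1 ∈ W} with hW'def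
  -- extremal endpoints
  obtain ⟨amax, hamaxW, hamax⟩ := Set.exists_max_image W' y (Set.toFinite _)
    ⟨(w0, false), hw0⟩
  obtain ⟨amin, haminW, hamin⟩ := Set.exists_min_image W' y (Set.toFinite _)
    ⟨(w0, false), hw0⟩
  have hmaxmin : amax ≠ amin := by
    intro h
    have h1 : (w0, false) ∈ W' := hw0
    have h2 : (w0, true) ∈ W' := hw0
    have e1 : y (w0, false) = y amax :=
      le_antisymm (hamax _ h1) (h ▸ hamin _ h1)
    have e2 : y (w0, true) = y amax :=
      le_antisymm (hamax _ h2) (h ▸ hamin _ h2)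
    have : ((w0, false) : V × Bool) = (w0, true) := hyinj (e1.trans e2.symm)
    simp at this
  -- the key property assigning to each edge an endpoint
  set P : Sym2 V → (V × Bool) → Prop := fun e wb =>
    wb.1 ∈ W ∧ ∃ u, u ∈ W ∧ u ≠ wb.1 ∧ e = s(u, wb.1) ∧
      pt wb ∈ (L u).carrier ∧ pt wb ≠ (L u).hEnd ∧ pt wb ≠ (L u).vEnd ∧
      pt wb ≠ (L u).bend with hPdef
  have hPex : ∀ e ∈ S, ∃ wb, P e wb := by
    intro e he
    induction e using Sym2.ind with
    | _ u v =>
      have hadj : G.Adj u v := G.mem_edgeSet.mp he.1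
      obtain ⟨hne, hnonempty⟩ := (hG u v).1 hadj
      have huW : u ∈ W := he.2 u (by simp)
      have hvW : v ∈ W := he.2 v (by simp)
      rcases hcontact u v hne with hemp | ⟨p, hpint, hcases⟩
      · rw [hemp] at hnonempty; exact absurd hnonempty (by simp)
      rcases hcases with ⟨hep, hpv, h1, h2, h3⟩ | ⟨hep, hpu, h1, h2, h3⟩
      · -- p is an endpoint of u, interior point of v
        rcases hep with hp | hp
        · refine ⟨(u, false), huW, v, hvW, hne.symm, Sym2.eq_swap.symm, ?_, ?_, ?_, ?_⟩
            <;> simp only [hptdef, if_neg Bool.false_ne_true, ← hp] <;> first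
            | exact hpv | exact h1 | exact h2 | exact h3
        · refine ⟨(u, true), huW, v, hvW, hne.symm, Sym2.eq_swap.symm, ?_, ?_, ?_, ?_⟩
            <;> simp only [hptdef, if_pos rfl, ← hp] <;> first
            | exact hpv | exact h1 | exact h2 | exact h3
      · -- p is an endpoint of v, interior point of u
        rcases hep with hp | hp
        · refine ⟨(v, false), hvW, u, huW, hne, rfl, ?_, ?_, ?_, ?_⟩
            <;> simp only [hptdef, if_neg Bool.false_ne_true, ← hp] <;> first
            | exact hpu | exact h1 | exact h2 | exact h3
        · refine ⟨(v, true), hvW, u, huW, hne, rfl, ?_, ?_, ?_, ?_⟩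
            <;> simp only [hptdef, if_pos rfl, ← hp] <;> first
            | exact hpu | exact h1 | exact h2 | exact h3
  set f : Sym2 V → V × Bool := fun e => if h : ∃ wb, P e wb then h.choose else (w0, false)
    with hfdef
  have hPf : ∀ e ∈ S, P e (f e) := by
    intro e he
    have h := hPex e he
    simp only [hfdef, dif_pos h]
    exact h.choose_spec
  -- injectivity
  have hinj : Set.InjOn f S := by
    intro e he e' he' hfe
    obtain ⟨hwW, u, huW, hu_ne, heq, hpu, hh1, hh2, hh3⟩ := hPf e he
    obtain ⟨_, u', hu'W, hu'_ne, heq', hpu', hh1', hh2', hh3'⟩ := hPf e' he'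
    rw [hfe] at heq hpu hh1 hh2 hh3
    by_cases huu : u = u'
    · subst huu; exact heq.trans heq'.symm
    · exfalso
      have hp : pt (f e') ∈ (L u).carrier ∩ (L u').carrier := ⟨hpu, hpu'⟩
      rcases hcontact u u' huu with hemp | ⟨q, hqint, hqcases⟩
      · rw [hemp] at hp; exact hp
      · rw [hqint] at hp
        have hpq : pt (f e') = q := hp
        rcases hqcases with ⟨hq, _⟩ | ⟨hq, _⟩
        · rcases hq with hq | hq
          · exact hh1 (hpq.trans hq)
          · exact hh2 (hpq.trans hq)
        · rcases hq with hq | hq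
          · exact hh1' (hpq.trans hq)
          · exact hh2' (hpq.trans hq)
  -- f maps into W' minus the extremal endpoints
  set T : Set (V × Bool) := W' \ {amax, amin} with hTdef
  have hmaps : ∀ e ∈ S, f e ∈ T := by
    intro e he
    obtain ⟨hwW, u, huW, hu_ne, heq, hpu, hh1, hh2, hh3⟩ := hPf e he
    refine ⟨hwW, ?_⟩
    -- key: there are endpoints of u strictly above and strictly below pt (f e)
    have hkey : (∃ b', (pt (f e)).2 < y (u, b')) ∧ (∃ b', y (u, b') < (pt (f e)).2) := by
      rcases interior_y hpu hh3 hh2 with hflat | ⟨hmem, hne1, hne2⟩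
      · exfalso
        have : y (f e) = y (u, false) := by
          rw [hy_pt, hflat]; simp [hydef, LShape.hEnd]
        have := hyinj this
        rw [this] at hu_ne
        exact hu_ne rfl
      · have hyf : y (u, false) = (L u).bend.2 := by simp [hydef, LShape.hEnd]
        have hyt : y (u, true) = (L u).vy := by simp [hydef, LShape.vEnd]
        rcases Set.mem_uIcc.1 hmem with ⟨ha, hb⟩ | ⟨ha, hb⟩
        · exact ⟨⟨true, by rw [hyt]; exact lt_of_le_of_ne hb hne2⟩,
            ⟨false, by rw [hyf]; exact lt_of_le_of_ne ha (Ne.symm hne1)⟩⟩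
        · exact ⟨⟨false, by rw [hyf]; exact lt_of_le_of_ne hb hne1⟩,
            ⟨true, by rw [hyt]; exact lt_of_le_of_ne ha (Ne.symm hne2)⟩⟩
    intro hmem
    rcases hmem with hmem | hmem
    · obtain ⟨b', hb'⟩ := hkey.1
      have : y (u, b') ≤ y (f e) := hmem ▸ hamax _ (by exact huW)
      rw [hy_pt (f e)] at this
      exact absurd this (not_le.2 hb')
    · obtain ⟨b', hb'⟩ := hkey.2
      have hmem' : f e = amin := hmem
      have : y (f e) ≤ y (u, b') := hmem' ▸ hamin _ (by exact huW)
      rw [hy_pt (f e)] at this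
      exact absurd this (not_le.2 hb')
  -- cardinality computations
  have hW'card : W'.ncard = 2 * W.ncard := by
    have himg : W' = (fun v => (v, false)) '' W ∪ (fun v => (v, true)) '' W := by
      ext ⟨v, b⟩
      cases b <;> simp [hW'def]
    rw [himg, Set.ncard_union_eq ?_ (Set.toFinite _) (Set.toFinite _),
      Set.ncard_image_of_injective _ (fun a b h => by simpa using h),
      Set.ncard_image_of_injective _ (fun a b h => by simpa using h)]
    · ring
    · rw [Set.disjoint_left]
      rintro ⟨v, b⟩ ⟨a, _, ha⟩ ⟨a', _, ha'⟩
      obtain ⟨rfl, rfl⟩ := Prod.mk.injEq .. ▸ ha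
      simp at ha'
  have hTcard : T.ncard = 2 * W.ncard - 2 := by
    rw [hTdef, Set.ncard_diff ?_ (Set.toFinite _), Set.ncard_pair hmaxmin, hW'card]
    rintro x (rfl | rfl)
    · exact hamaxW
    · exact haminW
  calc S.ncard ≤ T.ncard := Set.ncard_le_ncard_of_injOn f hmaps hinj (Set.toFinite _)
    _ = 2 * W.ncard - 2 := hTcard
end
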